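/- The q-multinomial identity qbinom3(l; l-n, l-n, 2n-l) − qbinom3(l; l-n-1, l-n+1, 2n-l) = (q^{l-n}/[l-n+1]_q) · qbinom(2(l-n), l-n) · qbinom(l, 2n-l) holds for n ≤ l ≤ 2n. -/

import Mathlib

inductive Step : Type
  | E | D | N
deriving DecidableEq

instance : Fintype Step :=
  ⟨{Step.E, Step.D, Step.N}, fun x => by cases x <;> simp⟩

open Step Polynomial

/-- All words of length `l` over the step alphabet. -/
def Words (l : ℕ) : Finset (List Step) :=
  (Finset.univ : Finset (Fin l → Step)).image List.ofFn

/-- Delannoy paths from (0,0) to (m,n) with `l` steps, encoded as words: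
`#E + #D = m`, `#N + #D = n`, length `l`. -/
def DelSet (m n l : ℕ) : Finset (List Step) :=
  (Words l).filter fun w => w.count E + w.count D = m ∧ w.count N + w.count D = n

/-- A word is bad if some prefix contains more N's than E's. -/
def bad (w : List Step) : Bool :=
  (List.range (w.length + 1)).any fun k => (w.take k).count E < (w.take k).count N

/-- Bad Delannoy paths from (0,0) to (n,n) with `l` steps. -/
def BDelSet (n l : ℕ) : Finset (List Step) :=
  (DelSet n n l).filter fun w => bad w

/-- Schröder paths: Delannoy paths to (n,n) never going above the diagonal. -/
def SchSet (n l : ℕ) : Finset (List Step) :=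
  (DelSet n n l).filter fun w => ¬ bad w

/-- Major index of a word w_1 ⋯ w_l with respect to a ranking of the letters:
the sum of all positions i (1 ≤ i ≤ l-1) with w_i > w_{i+1}. -/
def maj (rank : Step → ℕ) (w : List Step) : ℕ :=
  ∑ i ∈ Finset.range (w.length - 1),
    if rank (w.getD (i + 1) E) < rank (w.getD i E) then i + 1 else 0

/-- q-integer [m] = 1 + q + ⋯ + q^{m-1}. -/
noncomputable def qint (m : ℕ) : Polynomial ℚ :=
  ∑ i ∈ Finset.range m, X ^ i

/-- q-factorial. -/
noncomputable def qfact : ℕ → Polynomial ℚ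
  | 0 => 1
  | m + 1 => qfact m * qint (m + 1)

/-- Gaussian binomial coefficient, via the q-Pascal recurrence. -/
noncomputable def qbinom : ℕ → ℕ → Polynomial ℚ
  | _, 0 => 1
  | 0, _ + 1 => 0
  | m + 1, k + 1 => qbinom m k + X ^ (k + 1) * qbinom m (k + 1)

/-- q-trinomial coefficient [l]!/([a]![b]![c]!), defined when a+b+c = l. -/
noncomputable def qbinom3 (l a b c : ℕ) : Polynomial ℚ :=
  if a + b + c = l then qbinom l a * qbinom (l - a) b else 0

/-- Depth after the first `i` steps: #N − #E. -/
def depth (w : List Step) (i : ℕ) : ℤ :=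
  ((w.take i).count N : ℤ) - (w.take i).count E

/-- `k` (0 ≤ k ≤ l) achieves the maximal running depth. -/
def isMaxDepth (w : List Step) (k : ℕ) : Bool :=
  (List.range (w.length + 1)).all fun i => decide (depth w i ≤ depth w k)

/-- The first index (number of steps) at which the running depth is maximal. -/
def firstDeep (w : List Step) : ℕ :=
  (List.range (w.length + 1)).findIdx (isMaxDepth w)

/-- The last index at which the running depth is maximal. -/
def lastDeep (w : List Step) : ℕ :=
  w.length - (List.range (w.length + 1)).reverse.findIdx (isMaxDepth w)

/-- Replace the first deepest step (the step w_k, k = firstDeep) with E. -/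
def phi (w : List Step) : List Step := w.set (firstDeep w - 1) E

/-- Replace the step following the last deepest point with N. -/
def phiInv (w : List Step) : List Step := w.set (lastDeep w) N

/-- Number of consecutive D's immediately after the first deepest step. -/
def runS (w : List Step) : ℕ := ((w.drop (firstDeep w)).takeWhile (· == D)).length

/-- Number of consecutive D's immediately before the first deepest step. -/
def runR (w : List Step) : ℕ :=
  ((w.take (firstDeep w - 1)).reverse.takeWhile (· == D)).length

/-- The window map: replace W₁ = D^r w_k D^s by D^{r-1} E D^{s+1} if r ≥ 1,
and by D^s E if r = 0. -/
def phiWin (w : List Step) : List Step :=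
  let k := firstDeep w - 1
  let r := runR w
  let s := runS w
  let seg : List Step :=
    if 1 ≤ r then List.replicate (r - 1) D ++ [E] ++ List.replicate (s + 1) D
    else List.replicate s D ++ [E]
  w.take (k - r) ++ seg ++ w.drop (k + s + 1)

/-- 0-based index of the first step after which the path is above the diagonal. -/
def firstAbove (w : List Step) : ℕ :=
  (List.range w.length).findIdx fun i =>
    decide ((w.take (i + 1)).count E < (w.take (i + 1)).count N)

/-- The map ψ of Bonin–Shapiro–Simion: replace with E the last N of the maximal
run of consecutive N's beginning at the first step going above the diagonal. -/
def psi (w : List Step) : List Step :=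
  let i := firstAbove w
  let j := i + ((w.drop i).takeWhile (· == N)).length - 1
  w.set j E

/-! Since `qbinom3 l a b c = qbinom (a + b) a * qbinom l c`, the common factor `qbinom l (2n - l)`
splits off, and with `m = l - n` the identity becomes the q-Catalan identity
`[m+1] (qbinom (2m) m - qbinom (2m) (m-1)) = q^m qbinom (2m) m`. Clearing q-factorials, this
is `[m+1] - [m] = q^m`. -/

lemma qint_add (a b : ℕ) : qint (a + b) = qint a + X ^ a * qint b := by
  simp [qint, Finset.sum_range_add, Finset.mul_sum, pow_add]

lemma qint_succ (m : ℕ) : qint (m + 1) = qint m + X ^ m := by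
  simpa [qint] using qint_add m 1

lemma qfact_succ (m : ℕ) : qfact (m + 1) = qfact m * qint (m + 1) := rfl

lemma eval_one_qfact (n : ℕ) : (qfact n).eval 1 = n.factorial := by
  induction n with
  | zero => simp [qfact]
  | succ n ih => simp [qfact, qint, ih, Nat.factorial_succ, mul_comm]

lemma qfact_ne_zero (n : ℕ) : qfact n ≠ 0 := fun h => by
  simpa [h, eq_comm, Nat.factorial_ne_zero] using eval_one_qfact n

lemma qbinom_zero_right (n : ℕ) : qbinom n 0 = 1 := by
  cases n <;> simp [qbinom]

lemma qbinom_eq_zero_of_lt : ∀ {n k : ℕ}, n < k → qbinom n k = 0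
  | 0, _ + 1, _ => by simp [qbinom]
  | n + 1, k + 1, h => by
    rw [qbinom, qbinom_eq_zero_of_lt (by omega), qbinom_eq_zero_of_lt (by omega)]
    ring

lemma qbinom_self : ∀ n : ℕ, qbinom n n = 1
  | 0 => by simp [qbinom]
  | n + 1 => by rw [qbinom, qbinom_self n, qbinom_eq_zero_of_lt n.lt_succ_self]; ring

lemma qbinom_mul_qfact : ∀ {n k j : ℕ}, k + j = n → qbinom n k * (qfact k * qfact j) = qfact n
  | _, 0, j, rfl => by simp [qbinom_zero_right, qfact]
  | _, k + 1, 0, rfl => by simp [qbinom_self, qfact]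
  | _, k + 1, j + 1, rfl => by
    have pascal := qbinom_mul_qfact (n := k + j + 1) (k := k) (j := j + 1) (by omega)
    have pascal' := qbinom_mul_qfact (n := k + j + 1) (k := k + 1) (j := j) (by omega)
    have split : qint (k + j + 1 + 1) = qint (k + 1) + X ^ (k + 1) * qint (j + 1) := by
      rw [← qint_add]; ring_nf
    rw [show k + 1 + (j + 1) = k + j + 1 + 1 by omega, qbinom]
    rw [qfact_succ j] at pascal
    rw [qfact_succ k] at pascal'
    rw [qfact_succ k, qfact_succ j, qfact_succ (k + j + 1)]
    linear_combination
      qint (k + 1) * pascal + X ^ (k + 1) * qint (j + 1) * pascal' - qfact (k + j + 1) * split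

lemma qbinom3_eq_qbinom_mul_qbinom {l a b c : ℕ} (h : a + b + c = l) :
    qbinom3 l a b c = qbinom (a + b) a * qbinom l c := by
  have hF : qfact a * qfact b * qfact c ≠ 0 := by simp [qfact_ne_zero]
  apply mul_right_cancel₀ hF
  rw [qbinom3, if_pos h, show l - a = b + c by omega]
  have h₁ := qbinom_mul_qfact (n := l) (k := a) (j := b + c) (by omega)
  have h₂ := qbinom_mul_qfact (n := b + c) (k := b) (j := c) rfl
  have h₃ := qbinom_mul_qfact (n := a + b) (k := a) (j := b) rfl
  have h₄ := qbinom_mul_qfact (n := l) (k := c) (j := a + b) (by omega)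
  linear_combination qfact a * h₂ * qbinom l a + h₁ - qbinom l c * qfact c * h₃ - h₄

lemma qint_mul_qcatalan (m : ℕ) :
    qint (m + 2) * (qbinom (2 * m + 2) (m + 1) - qbinom (2 * m + 2) m) =
      X ^ (m + 1) * qbinom (2 * m + 2) (m + 1) := by
  have hF : qfact (m + 1) * qfact (m + 2) ≠ 0 := by simp [qfact_ne_zero]
  apply mul_right_cancel₀ hF
  have h₁ := qbinom_mul_qfact (n := 2 * m + 2) (k := m + 1) (j := m + 1) (by omega)
  have h₀ := qbinom_mul_qfact (n := 2 * m + 2) (k := m) (j := m + 2) (by omega)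
  rw [qfact_succ (m + 1)] at h₀ ⊢
  rw [qfact_succ m] at h₀ h₁ ⊢
  linear_combination (qint (m + 1 + 1) - X ^ (m + 1)) * qint (m + 1 + 1) * h₁ -
    qint (m + 1 + 1) * qint (m + 1) * h₀ +
    qint (m + 1 + 1) * qfact (2 * m + 2) * qint_succ (m + 1)

/-- the q-multinomial identity
qbinom3(l; l-n, l-n, 2n-l) − qbinom3(l; l-n-1, l-n+1, 2n-l)
  = (q^{l-n}/[l-n+1]) · qbinom(2(l-n), l-n) · qbinom(l, 2n-l)
for n ≤ l ≤ 2n (stated with the denominator [l-n+1] cleared). -/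
theorem q_multinomial_identity_NltE (n l : ℕ) (hnl : n ≤ l) (hl : l ≤ 2 * n) :
    qint (l - n + 1) *
        (qbinom3 l (l - n) (l - n) (2 * n - l) -
          qbinom3 l (l - n - 1) (l - n + 1) (2 * n - l)) =
      X ^ (l - n) * (qbinom (2 * (l - n)) (l - n) * qbinom l (2 * n - l)) := by
  obtain ⟨m, rfl⟩ : ∃ m, l = n + m := ⟨l - n, by omega⟩
  obtain ⟨c, rfl⟩ : ∃ c, n = m + c := ⟨n - m, by omega⟩
  rw [show m + c + m - (m + c) = m by omega, show 2 * (m + c) - (m + c + m) = c by omega]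
  cases m with
  -- for `m = 0` the parts `0 - 1, 1, c` of the second trinomial do not sum to `c`, so it vanishes
  | zero => simp [qbinom3, qbinom_zero_right, qbinom_self, qint]
  | succ m =>
    rw [qbinom3_eq_qbinom_mul_qbinom (by omega), qbinom3_eq_qbinom_mul_qbinom (by omega),
      show m + 1 + (m + 1) = 2 * m + 2 by omega, show m + 1 - 1 + (m + 1 + 1) = 2 * m + 2 by omega,
      show 2 * (m + 1) = 2 * m + 2 by omega, Nat.add_sub_cancel]
    linear_combination qbinom (m + 1 + c + (m + 1)) c * qint_mul_qcatalan m
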